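/- Let λ ∈ ℕ^N be an admissible partition (λ_N ≥ k, λ_i ≥ λ_{i+n}+k for i ≤ N-n). Define Λ⁰ by Λ⁰_{i,j} = λ_j - k if j + i > N + 1, and Λ⁰_{i,j} = max(λ_j - k, λ_{j+i-1}) if j + i ≤ N + 1, for 1 ≤ i ≤ n+1, 1 ≤ j ≤ N (with λ_m = 0 for m > N). Then Λ⁰ is a nonnegative GT pattern of height n and length N with top row Λ⁰₁ = λ and bottom row Λ⁰_{n+1} = λ^↓, i.e., each row is non-increasing, and consecutive rows interlace: Λ⁰_{i,j} ≥ Λ⁰_{i+1,j} ≥ Λ⁰_{i,j+1}. -/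

import Mathlib

/-- Extension of a finite tuple by zero. -/
def extZ {N : ℕ} (f : Fin N → ℕ) (j : ℕ) : ℕ := if h : j < N then f ⟨j, h⟩ else 0

/-- The interlacing relation `α ≥_p β`. -/
def Interlace (p : ℕ) (α β : ℕ → ℕ) : Prop := ∀ j : ℕ, β j ≤ α j ∧ α (j + p) ≤ β j

/-!
Extending `λ` by zeros to `a : ℕ → ℕ` makes the case split in the definition of `Λ⁰`
disappear: every row, extended by zeros, is `j ↦ max (a j - k) (a (j + i))`. Since `a` is
antitone, these rows are antitone, decrease with `i`, and row `i` shifted by one is dominated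
by row `i + 1`, which is the interlacing. For `i = 0` the maximum is `a j`, and for `i = n`
it is `a j - k` by admissibility.
-/

section ExtZ

variable {N : ℕ}

lemma extZ_val (f : Fin N → ℕ) (j : Fin N) : extZ f j = f j := by
  simp [extZ]

lemma extZ_of_le (f : Fin N → ℕ) {j : ℕ} (hj : N ≤ j) : extZ f j = 0 := by
  simp [extZ, not_lt.mpr hj]

lemma extZ_restrict {F : ℕ → ℕ} (hF : ∀ j, N ≤ j → F j = 0) :
    extZ (fun j : Fin N => F j) = F := by
  funext j
  by_cases hj : j < N
  · simp [extZ, hj]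
  · simp [extZ, hj, hF j (not_lt.mp hj)]

lemma antitone_extZ {f : Fin N → ℕ} (hf : Antitone f) : Antitone (extZ f) := by
  intro a b hab
  unfold extZ
  split_ifs with hb ha ha
  · exact hf (Fin.mk_le_mk.mpr hab)
  · omega
  · exact Nat.zero_le _
  · exact le_rfl

end ExtZ

lemma interlace_max_shift {a b : ℕ → ℕ} (ha : Antitone a) (hb : Antitone b) (i : ℕ) :
    Interlace 1 (fun j => max (b j) (a (j + i)))
      (fun j => max (b j) (a (j + (i + 1)))) :=
  fun j => ⟨max_le_max le_rfl (ha (by omega)),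
    max_le_max (hb (Nat.le_succ j)) (le_of_eq (congrArg a (by omega)))⟩

/-- Row `i` (counted from `0`) of `Λ⁰`, extended by zeros. -/
def initialRow {N : ℕ} (lam : Fin N → ℕ) (k i : ℕ) (j : ℕ) : ℕ :=
  max (extZ lam j - k) (extZ lam (j + i))

section InitialRow

variable {N : ℕ} (lam : Fin N → ℕ) (k : ℕ)

lemma initialRow_val (i : ℕ) (j : Fin N) :
    initialRow lam k i j =
      if h : (j : ℕ) + i < N then max (lam j - k) (lam ⟨(j : ℕ) + i, h⟩)
      else lam j - k := by
  unfold initialRow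
  split_ifs with h
  · simp [extZ, h]
  · simp [extZ_of_le lam (not_lt.mp h), extZ_val]

lemma extZ_initialRow (i : ℕ) :
    extZ (fun j : Fin N => initialRow lam k i j) = initialRow lam k i :=
  extZ_restrict fun j hj => by
    simp [initialRow, extZ_of_le lam hj, extZ_of_le lam (hj.trans (Nat.le_add_right j i))]

lemma initialRow_zero (j : Fin N) : initialRow lam k 0 j = lam j := by
  simp [initialRow, extZ_val]

lemma initialRow_of_admissible {n : ℕ}
    (hadm : ∀ i : Fin N, ∀ h : (i : ℕ) + n < N, lam ⟨(i : ℕ) + n, h⟩ + k ≤ lam i)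
    (j : Fin N) :
    initialRow lam k n j = lam j - k := by
  rw [initialRow_val]
  split_ifs with h
  · exact max_eq_left (Nat.le_sub_of_add_le (hadm j h))
  · rfl

variable {lam}

lemma antitone_initialRow (hlam : Antitone lam) (i : ℕ) : Antitone (initialRow lam k i) :=
  Antitone.max (fun _ _ h => Nat.sub_le_sub_right (antitone_extZ hlam h) k)
    ((antitone_extZ hlam).comp_monotone fun _ _ h => Nat.add_le_add_right h i)

lemma interlace_initialRow (hlam : Antitone lam) (i : ℕ) :
    Interlace 1 (initialRow lam k i) (initialRow lam k (i + 1)) :=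
  interlace_max_shift (antitone_extZ hlam)
    (fun _ _ h => Nat.sub_le_sub_right (antitone_extZ hlam h) k) i

end InitialRow

theorem statement17_general (N n k : ℕ)
    (lam : Fin N → ℕ) (hlam : Antitone lam)
    (hadm2 : ∀ i : Fin N, ∀ h : (i : ℕ) + n < N, lam ⟨(i : ℕ) + n, h⟩ + k ≤ lam i)
    (Λ : Fin (n + 1) → Fin N → ℕ)
    (hΛ : ∀ (i : Fin (n + 1)) (j : Fin N),
      Λ i j = if h : (j : ℕ) + (i : ℕ) < N then
          max (lam j - k) (lam ⟨(j : ℕ) + (i : ℕ), h⟩)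
        else lam j - k) :
    (Λ 0 = lam) ∧
    (∀ j, Λ (Fin.last n) j = lam j - k) ∧
    (∀ i, Antitone (Λ i)) ∧
    (∀ i : Fin n, Interlace 1 (extZ (Λ i.castSucc)) (extZ (Λ i.succ))) := by
  have hrow : ∀ i, Λ i = fun j : Fin N => initialRow lam k i j := fun i =>
    funext fun j => (hΛ i j).trans (initialRow_val lam k i j).symm
  refine ⟨?_, fun j => ?_, fun i => ?_, fun i => ?_⟩
  · funext j
    simpa [hrow] using initialRow_zero lam k j
  · simpa [hrow] using initialRow_of_admissible lam k hadm2 j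
  · rw [hrow]
    exact (antitone_initialRow k hlam i).comp_monotone Fin.val_strictMono.monotone
  · rw [hrow, hrow, extZ_initialRow, extZ_initialRow]
    exact interlace_initialRow k hlam i

/-- For an admissible partition `λ`, the array
`Λ⁰_{i,j} = λ_j - k` if `j + i > N + 1`, and `Λ⁰_{i,j} = max(λ_j - k, λ_{j+i-1})` if
`j + i ≤ N + 1` (1-based indices, `λ_m = 0` for `m > N`) is a nonnegative GT pattern of
height `n` and length `N` with top row `λ` and bottom row `λ↓`: each row is
non-increasing and consecutive rows interlace. -/
theorem statement17 (N n k : ℕ) (hn : 0 < n) (hk : 0 < k)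
    (lam : Fin N → ℕ) (hlam : Antitone lam)
    (hadm1 : ∀ i, k ≤ lam i)
    (hadm2 : ∀ i : Fin N, ∀ h : (i : ℕ) + n < N, lam ⟨(i : ℕ) + n, h⟩ + k ≤ lam i)
    (Λ : Fin (n + 1) → Fin N → ℕ)
    (hΛ : ∀ (i : Fin (n + 1)) (j : Fin N),
      Λ i j = if h : (j : ℕ) + (i : ℕ) < N then
          max (lam j - k) (lam ⟨(j : ℕ) + (i : ℕ), h⟩)
        else lam j - k) :
    (Λ 0 = lam) ∧
    (∀ j, Λ (Fin.last n) j = lam j - k) ∧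
    (∀ i, Antitone (Λ i)) ∧
    (∀ i : Fin n, Interlace 1 (extZ (Λ i.castSucc)) (extZ (Λ i.succ))) :=
  statement17_general N n k lam hlam hadm2 Λ hΛ
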